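/- Let (G,L) be an uncolorable pair such that G is a block (i.e., G is connected and has no separating vertex) and G has maximum multiplicity μ(G) ≥ 2 (some pair of vertices is joined by at least two parallel edges). Then G is r-regular for some even integer r ≥ 2. -/

import Mathlib

/-!
In an uncolorable pair every list has exactly `d(v)` colours: a vertex with a spare colour can be
coloured last in a greedy colouring directed towards it. If `x` is not a separating vertex and is
coloured `c ∈ L(x)`, the same greedy argument in the connected graph `G - x` shows that every
neighbour `y` loses `μ(x, y)` colours; so the colours `σ(e) c` of the `x`–`y` edges `e` are
distinct and all lie in `L(y)`. Hence `c ↦ σ(e) c` embeds `L(x)` into `L(y)`, and all lists, like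
all degrees, have the same size. Across a multiple edge this gives `c ≠ 0` and `-c ∈ L(x)` for
every `c ∈ L(x)`, so `|L(x)|` is even.
-/

open scoped Classical

/-- A signed graph: a finite loopless multigraph together with a sign `+1` or `-1`
on each edge. -/
structure SignedGraph where
  /-- vertex type -/
  V : Type
  /-- edge type -/
  E : Type
  fintypeV : Fintype V
  fintypeE : Fintype E
  decEqV : DecidableEq V
  /-- the two (distinct) endpoints of an edge, as an unordered pair -/
  ends : E → Sym2 V
  loopless : ∀ e : E, ¬ (ends e).IsDiag
  /-- the sign of an edge -/
  sign : E → ℤ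
  sign_unit : ∀ e : E, sign e = 1 ∨ sign e = -1

attribute [instance] SignedGraph.fintypeV SignedGraph.fintypeE SignedGraph.decEqV

namespace SignedGraph

variable (G : SignedGraph)

/-- The degree of a vertex: the number of edges incident with it. -/
noncomputable def degree (v : G.V) : ℕ :=
  (Finset.univ.filter (fun e : G.E => v ∈ G.ends e)).card

/-- The maximum degree `Δ(G)`. -/
noncomputable def maxDegree : ℕ :=
  Finset.univ.sup (fun v : G.V => G.degree v)

/-- Two vertices are adjacent if some edge joins them. -/
def Adj (v w : G.V) : Prop := ∃ e : G.E, G.ends e = s(v, w)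

/-- The simple graph of the adjacency relation (underlying simplification). -/
def adjGraph : SimpleGraph G.V where
  Adj := G.Adj
  symm := ⟨fun _ _ h => by obtain ⟨e, he⟩ := h; exact ⟨e, he.trans (Sym2.eq_swap)⟩⟩
  loopless := ⟨fun v h => by
    obtain ⟨e, he⟩ := h
    exact G.loopless e (by rw [he]; exact Sym2.mk_isDiag_iff.mpr rfl)⟩

/-- A signed graph is connected if its underlying graph is connected. -/
def Connected : Prop := G.adjGraph.Connected

/-- The underlying graph is simple: no two parallel edges. -/
def SimpleUnderlying : Prop := ∀ e f : G.E, G.ends e = G.ends f → e = f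

/-- A (proper) coloring of a signed graph. -/
def IsColoring (φ : G.V → ℤ) : Prop :=
  ∀ (e : G.E) (v w : G.V), G.ends e = s(v, w) → φ v ≠ G.sign e * φ w

/-- The color set `Z_k`:  `Z_{2h} = {±1, …, ±h}` and `Z_{2h+1} = Z_{2h} ∪ {0}`. -/
def ZSet (k : ℕ) : Set ℤ := {x : ℤ | 2 * |x| ≤ (k : ℤ) ∧ (x = 0 → Odd k)}

/-- The signed chromatic number `χ±(G)`: the least `k` such that `G` admits a
coloring with image contained in `Z_k`. -/
noncomputable def signedChromaticNumber : ℕ :=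
  sInf {k : ℕ | ∃ φ : G.V → ℤ, G.IsColoring φ ∧ ∀ v : G.V, φ v ∈ ZSet k}

/-- `G` admits a coloring from the lists `L`. -/
def ListColorable (L : G.V → Finset ℤ) : Prop :=
  ∃ φ : G.V → ℤ, G.IsColoring φ ∧ ∀ v : G.V, φ v ∈ L v

/-- The signed choice number `χℓ±(G)`. -/
noncomputable def signedChoiceNumber : ℕ :=
  sInf {k : ℕ | ∀ L : G.V → Finset ℤ, (∀ v : G.V, (L v).card = k) → G.ListColorable L}

/-- `G` is degree choosable. -/
def DegreeChoosable : Prop :=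
  ∀ L : G.V → Finset ℤ, (∀ v : G.V, (L v).card = G.degree v) → G.ListColorable L

/-- `(G, L)` is an uncolorable pair. -/
def UncolorablePair (L : G.V → Finset ℤ) : Prop :=
  G.Connected ∧ (∀ v : G.V, G.degree v ≤ (L v).card) ∧ ¬ G.ListColorable L

/-- Walks in a signed multigraph. -/
inductive Walk (G : SignedGraph) : G.V → G.V → Type
  | nil (v : G.V) : Walk G v v
  | cons {v w u : G.V} (e : G.E) (he : G.ends e = s(v, w)) (p : Walk G w u) : Walk G v u

namespace Walk

variable {G}

/-- The list of edges of a walk. -/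
def edges : ∀ {v w : G.V}, Walk G v w → List G.E
  | _, _, .nil _ => []
  | _, _, .cons e _ p => e :: edges p

/-- The list of vertices of a walk. -/
def support : ∀ {v w : G.V}, Walk G v w → List G.V
  | _, _, .nil v => [v]
  | v, _, .cons _ _ p => v :: support p

/-- The length of a walk. -/
def length {v w : G.V} (p : Walk G v w) : ℕ := p.edges.length

/-- The sign product of a walk. -/
def signProd {v w : G.V} (p : Walk G v w) : ℤ := (p.edges.map G.sign).prod

/-- A cycle: a nonempty closed walk with no repeated edges and no repeated
vertices (except the first = last). -/
def IsCycle {v : G.V} (p : Walk G v v) : Prop :=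
  p.edges ≠ [] ∧ p.edges.Nodup ∧ p.support.tail.Nodup

end Walk

/-- A signed graph is balanced if every cycle has positive sign product. -/
def Balanced : Prop := ∀ (v : G.V) (p : Walk G v v), p.IsCycle → p.signProd = 1

/-- A signed graph is antibalanced if every even cycle has positive sign product
and every odd cycle has negative sign product. -/
def Antibalanced : Prop :=
  ∀ (v : G.V) (p : Walk G v v), p.IsCycle → p.signProd = (-1) ^ p.length

/-- `G` is balanced with parts `X`, `Y`: the vertex set is the disjoint union of
`X` and `Y` and an edge is negative iff it joins `X` to `Y`. -/
def BalancedWithParts (X Y : Set G.V) : Prop :=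
  X ∪ Y = Set.univ ∧ Disjoint X Y ∧
  ∀ (e : G.E) (v w : G.V), G.ends e = s(v, w) →
    (G.sign e = -1 ↔ (v ∈ X ∧ w ∈ Y) ∨ (v ∈ Y ∧ w ∈ X))

/-- The underlying graph is a complete (simple) graph. -/
def IsCompleteGraph : Prop :=
  G.SimpleUnderlying ∧ ∀ v w : G.V, v ≠ w → G.Adj v w

/-- `G` is a balanced complete graph. -/
def IsBalancedComplete : Prop := G.IsCompleteGraph ∧ G.Balanced

/-- The underlying graph is a cycle. -/
def IsCycleGraph : Prop :=
  G.Connected ∧ G.SimpleUnderlying ∧ ∀ v : G.V, G.degree v = 2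

/-- `G` is a balanced odd cycle. -/
def IsBalancedOddCycle : Prop :=
  G.IsCycleGraph ∧ G.Balanced ∧ Odd (Fintype.card G.V)

/-- `G` is an unbalanced even cycle. -/
def IsUnbalancedEvenCycle : Prop :=
  G.IsCycleGraph ∧ ¬ G.Balanced ∧ Even (Fintype.card G.V)

/-- Every edge of `G` comes in a pair of parallel edges of opposite sign, and
any two vertices are joined by at most two edges. -/
def Doubled : Prop :=
  ∀ (e : G.E) (v w : G.V), G.ends e = s(v, w) →
    ∃ f : G.E, f ≠ e ∧ G.ends f = s(v, w) ∧ G.sign f = - G.sign e ∧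
      ∀ g : G.E, G.ends g = s(v, w) → g = e ∨ g = f

/-- `G` is a `2Kₙ` for some `n ≥ 2`. -/
def IsDoubleComplete : Prop :=
  2 ≤ Fintype.card G.V ∧ G.Doubled ∧ ∀ v w : G.V, v ≠ w → G.Adj v w

/-- `G` is a `2Cₙ` for some odd `n ≥ 3`. -/
def IsDoubleOddCycle : Prop :=
  G.Connected ∧ G.Doubled ∧ (∀ v : G.V, G.degree v = 4) ∧ Odd (Fintype.card G.V)

/-- A brick. -/
def IsBrick : Prop :=
  G.IsBalancedComplete ∨ G.IsBalancedOddCycle ∨ G.IsUnbalancedEvenCycle ∨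
    G.IsDoubleComplete ∨ G.IsDoubleOddCycle

/-- A subgraph of a signed graph. -/
structure Subgraph (G : SignedGraph) where
  verts : Set G.V
  edges : Set G.E
  ends_mem : ∀ e ∈ edges, ∀ v ∈ G.ends e, v ∈ verts

namespace Subgraph

variable {G}

/-- A subgraph, regarded as a signed graph in its own right. -/
noncomputable def toSG (H : G.Subgraph) : SignedGraph where
  V := H.verts
  E := H.edges
  fintypeV := Fintype.ofFinite _
  fintypeE := Fintype.ofFinite _
  decEqV := inferInstance
  ends := fun e =>
    s((⟨(G.ends e.1).out.1, H.ends_mem e.1 e.2 _ (Sym2.out_fst_mem _)⟩ : H.verts),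
      (⟨(G.ends e.1).out.2, H.ends_mem e.1 e.2 _ (Sym2.out_snd_mem _)⟩ : H.verts))
  loopless := fun e h => by
    rw [Sym2.mk_isDiag_iff, Subtype.mk.injEq] at h
    exact G.loopless e.1 (by
      rw [← (G.ends e.1).out_eq]
      exact Sym2.mk_isDiag_iff.mpr h)
  sign := fun e => G.sign e.1
  sign_unit := fun e => G.sign_unit e.1

/-- Delete a vertex (and all incident edges) from a subgraph. -/
def delete (H : G.Subgraph) (v : G.V) : G.Subgraph where
  verts := H.verts \ {v}
  edges := {e ∈ H.edges | v ∉ G.ends e}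
  ends_mem := fun e he w hw =>
    ⟨H.ends_mem e he.1 w hw, fun h => he.2 (by rwa [Set.mem_singleton_iff.mp h] at hw)⟩

/-- Subgraph inclusion. -/
def Le (H K : G.Subgraph) : Prop := H.verts ⊆ K.verts ∧ H.edges ⊆ K.edges

/-- `v` is a separating (cut) vertex of the subgraph `H`. -/
def IsCutVertex (H : G.Subgraph) (v : G.V) : Prop :=
  v ∈ H.verts ∧ (H.delete v).verts.Nonempty ∧ ¬ (H.delete v).toSG.Connected

/-- `B` is a block of `G`: a maximal connected subgraph without a cut vertex. -/
def IsBlock (B : G.Subgraph) : Prop :=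
  B.toSG.Connected ∧ (∀ v : G.V, ¬ B.IsCutVertex v) ∧
  ∀ B' : G.Subgraph, B.Le B' → B'.toSG.Connected →
    (∀ v : G.V, ¬ B'.IsCutVertex v) → B'.Le B

/-- The degree of a vertex in a subgraph. -/
noncomputable def degree (H : G.Subgraph) (v : G.V) : ℕ :=
  (Finset.univ.filter (fun e : G.E => e ∈ H.edges ∧ v ∈ G.ends e)).card

/-- The minimum degree of a subgraph. -/
noncomputable def minDegree (H : G.Subgraph) : ℕ :=
  sInf {d : ℕ | ∃ v ∈ H.verts, H.degree v = d}

/-- The subgraph admits a coloring from the lists `L`. -/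
def ListColorable (H : G.Subgraph) (L : G.V → Finset ℤ) : Prop :=
  ∃ φ : G.V → ℤ,
    (∀ e ∈ H.edges, ∀ v w : G.V, G.ends e = s(v, w) → φ v ≠ G.sign e * φ w) ∧
    ∀ v ∈ H.verts, φ v ∈ L v

/-- A proper subgraph. -/
def IsProper (H : G.Subgraph) : Prop :=
  H.verts ≠ Set.univ ∨ H.edges ≠ Set.univ

end Subgraph

/-- The subgraph consisting of all of `G`. -/
def topSubgraph : G.Subgraph := ⟨Set.univ, Set.univ, fun _ _ _ _ => trivial⟩

/-- A separating (cut) vertex of `G`. -/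
def IsCutVertex (v : G.V) : Prop := G.topSubgraph.IsCutVertex v

/-- The coloring number `col(G)`: one plus the maximum over all (nonempty)
subgraphs of the minimum degree. -/
noncomputable def coloringNumber : ℕ :=
  1 + sSup {d : ℕ | ∃ H : G.Subgraph, H.verts.Nonempty ∧ H.minDegree = d}

/-- The subgraph induced by a vertex set `X`. -/
def induced (X : Set G.V) : G.Subgraph where
  verts := X
  edges := {e : G.E | ∀ v ∈ G.ends e, v ∈ X}
  ends_mem := fun e he v hv => he v hv

/-- `G` is `L`-critical. -/
def LCritical (L : G.V → Finset ℤ) : Prop :=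
  ¬ G.ListColorable L ∧ ∀ H : G.Subgraph, H.IsProper → H.ListColorable L

/-- `G` is `k`-critical (with respect to the signed chromatic number). -/
def KCritical (k : ℕ) : Prop :=
  G.signedChromaticNumber = k ∧
  ∀ H : G.Subgraph, H.IsProper → H.toSG.signedChromaticNumber ≤ k - 1

/-- `G` is `k`-list-critical. -/
def KListCritical (k : ℕ) : Prop :=
  ∃ L : G.V → Finset ℤ, (∀ v : G.V, (L v).card = k - 1) ∧ G.LCritical L

/-- The signed graph `2H` obtained from a simple graph `H` by replacing every
edge by a pair of parallel edges, one positive and one negative. -/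
noncomputable def double {W : Type} [Fintype W] [DecidableEq W] (H : SimpleGraph W) :
    SignedGraph where
  V := W
  E := H.edgeSet × Bool
  fintypeV := inferInstance
  fintypeE := Fintype.ofFinite _
  decEqV := inferInstance
  ends := fun e => e.1.1
  loopless := fun e => H.not_isDiag_of_mem_edgeSet e.1.2
  sign := fun e => if e.2 then 1 else -1
  sign_unit := fun e => by by_cases h : e.2 <;> simp [h]

end SignedGraph

open Finset

theorem SimpleGraph.Reachable.exists_adj_dist_lt {α : Type*} {Γ : SimpleGraph α} {a t : α}
    (h : Γ.Reachable a t) (ha : a ≠ t) : ∃ b, Γ.Adj a b ∧ Γ.dist b t < Γ.dist a t := by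
  obtain ⟨p, hp⟩ := h.exists_walk_length_eq_dist
  cases p with
  | nil => exact absurd rfl ha
  | cons hadj q =>
    rw [SimpleGraph.Walk.length_cons] at hp
    exact ⟨_, hadj, hp ▸ (SimpleGraph.dist_le q).trans_lt (Nat.lt_succ_self _)⟩

theorem Int.even_card_of_neg_mem {A : Finset ℤ} (h0 : 0 ∉ A) (hneg : ∀ c ∈ A, -c ∈ A) :
    Even #A := by
  have hsplit : #{c ∈ A | 0 < c} = #{c ∈ A | ¬ 0 < c} := by
    refine card_nbij' (- ·) (- ·) ?_ ?_ (fun _ _ ↦ neg_neg _) (fun _ _ ↦ neg_neg _)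
    · intro c hc
      simp only [coe_filter, Set.mem_ofPred_eq] at hc ⊢
      exact ⟨hneg c hc.1, by omega⟩
    · intro c hc
      simp only [coe_filter, Set.mem_ofPred_eq] at hc ⊢
      have : c ≠ 0 := fun hc0 ↦ h0 (hc0 ▸ hc.1)
      exact ⟨hneg c hc.1, by omega⟩
  rw [← card_filter_add_card_filter_not (fun c ↦ 0 < c), hsplit]
  exact ⟨_, rfl⟩

namespace SignedGraph

variable {G : SignedGraph}

lemma sign_mul_self (e : G.E) : G.sign e * G.sign e = 1 := by
  rcases G.sign_unit e with h | h <;> simp [h]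

lemma sign_ne_zero (e : G.E) : G.sign e ≠ 0 := by
  rcases G.sign_unit e with h | h <;> simp [h]

lemma ne_of_ends_eq {e : G.E} {v w : G.V} (h : G.ends e = s(v, w)) : v ≠ w := by
  rintro rfl
  exact G.loopless e (h ▸ Sym2.mk_isDiag_iff.mpr rfl)

lemma Subgraph.adj_of_toSG_adj {H : G.Subgraph} {a b : H.verts} (hab : H.toSG.Adj a b) :
    G.Adj a b := by
  obtain ⟨e, he⟩ := hab
  refine ⟨e.1, ?_⟩
  rw [← (G.ends e.1).out_eq]
  exact congrArg (Sym2.map Subtype.val) he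

/-- The edges joining `v` and `w`; their number is the multiplicity `μ_G(v, w)`. -/
noncomputable def edgesBetween (v w : G.V) : Finset G.E := {e | G.ends e = s(v, w)}

lemma mem_edgesBetween {v w : G.V} {e : G.E} : e ∈ G.edgesBetween v w ↔ G.ends e = s(v, w) := by
  simp [edgesBetween]

lemma edgesBetween_comm (v w : G.V) : G.edgesBetween v w = G.edgesBetween w v := by
  simp [edgesBetween, Sym2.eq_swap]

lemma card_edgesBetween_le_degree (v w : G.V) : #(G.edgesBetween v w) ≤ G.degree v :=
  card_le_card fun e he ↦ by
    simp only [mem_filter, mem_univ, true_and, mem_edgesBetween.mp he, Sym2.mem_mk_left]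

/-- The colours that `u` can no longer take once `v` is coloured `c`. -/
noncomputable def forbidden (v : G.V) (c : ℤ) (u : G.V) : Finset ℤ :=
  (G.edgesBetween v u).image (G.sign · * c)

lemma sign_mul_mem_forbidden {e : G.E} {v u : G.V} (he : G.ends e = s(v, u)) (c : ℤ) :
    G.sign e * c ∈ G.forbidden v c u :=
  mem_image_of_mem _ (mem_edgesBetween.mpr he)

lemma card_forbidden_le (v : G.V) (c : ℤ) (u : G.V) :
    #(G.forbidden v c u) ≤ #(G.edgesBetween v u) :=
  card_image_le

lemma forbidden_subset_pair (v : G.V) (c : ℤ) (u : G.V) : G.forbidden v c u ⊆ {c, -c} := by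
  intro t ht
  obtain ⟨e, -, rfl⟩ := mem_image.mp ht
  rcases G.sign_unit e with h | h <;> simp [h]

noncomputable def degreeIn (S : Finset G.V) (v : G.V) : ℕ := #{e | ∃ w ∈ S, G.ends e = s(v, w)}

lemma degreeIn_univ (v : G.V) : G.degreeIn univ v = G.degree v := by
  simp only [degreeIn, degree, mem_univ, true_and, Sym2.mem_iff_exists, eq_comm]

lemma degreeIn_erase_add_card_edgesBetween_le {S : Finset G.V} {u : G.V} (hu : u ∈ S)
    (v : G.V) : G.degreeIn (S.erase u) v + #(G.edgesBetween v u) ≤ G.degreeIn S v := by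
  rw [degreeIn, degreeIn, ← card_union_of_disjoint]
  · refine card_le_card fun e he ↦ ?_
    simp only [mem_union, mem_filter, mem_univ, true_and, mem_edgesBetween] at he ⊢
    rcases he with ⟨w, hw, he⟩ | he
    · exact ⟨w, mem_of_mem_erase hw, he⟩
    · exact ⟨u, hu, he⟩
  · refine disjoint_left.mpr fun e he he' ↦ ?_
    simp only [mem_filter, mem_univ, true_and, mem_edgesBetween] at he he'
    obtain ⟨w, hw, he⟩ := he
    exact ne_of_mem_erase hw (Sym2.congr_right.mp (he.symm.trans he'))

/-- Colouring `u ∈ S` and shrinking every list by the colours it forbids does not decrease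
the slack `#L - degreeIn` of any vertex. -/
lemma degreeIn_erase_add_card_le {S : Finset G.V} {u : G.V} (hu : u ∈ S) (c : ℤ)
    (L : Finset ℤ) (v : G.V) :
    G.degreeIn (S.erase u) v + #L ≤ G.degreeIn S v + #(L \ G.forbidden u c v) := by
  have hdeg := G.degreeIn_erase_add_card_edgesBetween_le hu v
  have hsdiff := le_card_sdiff (G.forbidden u c v) L
  have hforb := G.card_forbidden_le u c v
  rw [edgesBetween_comm] at hdeg
  omega

def IsColoringOn (S : Finset G.V) (φ : G.V → ℤ) : Prop :=
  ∀ (e : G.E) (v w : G.V), G.ends e = s(v, w) → v ∈ S → w ∈ S → φ v ≠ G.sign e * φ w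

lemma isColoringOn_univ {φ : G.V → ℤ} : G.IsColoringOn univ φ ↔ G.IsColoring φ := by
  simp [IsColoringOn, IsColoring]

lemma IsColoringOn.update {S : Finset G.V} {φ : G.V → ℤ} (hφ : G.IsColoringOn S φ)
    {L : G.V → Finset ℤ} {v : G.V} {c : ℤ} (hφL : ∀ u ∈ S, φ u ∈ L u \ G.forbidden v c u)
    (hc : c ∈ L v) :
    G.IsColoringOn (insert v S) (Function.update φ v c) ∧
      ∀ u ∈ insert v S, Function.update φ v c u ∈ L u := by
  have hfree (u : G.V) (hu : u ∈ S) := (mem_sdiff.mp (hφL u hu)).2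
  refine ⟨fun e a b hab ha hb ↦ ?_, fun u hu ↦ ?_⟩
  · by_cases hav : a = v <;> by_cases hbv : b = v
    · exact absurd (hav.trans hbv.symm) (ne_of_ends_eq hab)
    · subst hav
      rw [Function.update_self, Function.update_of_ne hbv]
      intro heq
      refine hfree b ((mem_insert.mp hb).resolve_left hbv) ?_
      rw [show φ b = G.sign e * c by rw [heq, ← mul_assoc, sign_mul_self, one_mul]]
      exact sign_mul_mem_forbidden hab c
    · subst hbv
      rw [Function.update_self, Function.update_of_ne hav]
      intro heq
      refine hfree a ((mem_insert.mp ha).resolve_left hav) (heq ▸ sign_mul_mem_forbidden ?_ c)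
      rw [hab, Sym2.eq_swap]
    · rw [Function.update_of_ne hav, Function.update_of_ne hbv]
      exact hφ e a b hab ((mem_insert.mp ha).resolve_left hav)
        ((mem_insert.mp hb).resolve_left hbv)
  · by_cases huv : u = v
    · rwa [huv, Function.update_self]
    · rw [Function.update_of_ne huv]
      exact (mem_sdiff.mp (hφL u ((mem_insert.mp hu).resolve_left huv))).1

/-- Greedy list colouring: colour a vertex of largest rank first and recurse. Each vertex other
than the root `x` still has an uncoloured neighbour of smaller rank at its turn, so its list is
never exhausted; the root is saved by its slack. -/
theorem exists_isColoringOn_of_degreeIn_le (rank : G.V → ℕ) {x : G.V} (S : Finset G.V)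
    (L : G.V → Finset ℤ) (hx : x ∈ S)
    (hdesc : ∀ v ∈ S, v ≠ x → ∃ w ∈ S, G.Adj v w ∧ rank w < rank v)
    (hle : ∀ v ∈ S, G.degreeIn S v ≤ #(L v)) (hlt : G.degreeIn S x < #(L x)) :
    ∃ φ, G.IsColoringOn S φ ∧ ∀ v ∈ S, φ v ∈ L v := by
  induction S using Finset.strongInduction generalizing L with
  | H S ih =>
  rcases (S.erase x).eq_empty_or_nonempty with hS | hS
  · obtain ⟨c, hc⟩ := card_pos.mp (Nat.zero_lt_of_lt hlt)
    have hSx : S = {x} := by rw [← insert_erase hx, hS]; rfl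
    subst hSx
    refine ⟨fun _ ↦ c, fun e v w hvw hv hw ↦ ?_, fun v hv ↦ mem_singleton.mp hv ▸ hc⟩
    rw [mem_singleton] at hv hw
    exact absurd (hv.trans hw.symm) (ne_of_ends_eq hvw)
  obtain ⟨v, hvS', hvmax⟩ := exists_max_image (S.erase x) rank hS
  obtain ⟨hvx, hvS⟩ := mem_erase.mp hvS'
  obtain ⟨w, hwS, ⟨e, he⟩, -⟩ := hdesc v hvS hvx
  have hdeg : 0 < G.degreeIn S v :=
    card_pos.mpr ⟨e, mem_filter.mpr ⟨mem_univ e, w, hwS, he⟩⟩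
  obtain ⟨c, hc⟩ := card_pos.mp (hdeg.trans_le (hle v hvS))
  obtain ⟨φ, hφ, hφL⟩ := ih (S.erase v) (erase_ssubset hvS) (fun u ↦ L u \ G.forbidden v c u)
    (mem_erase.mpr ⟨Ne.symm hvx, hx⟩)
    (fun u hu hux ↦ by
      obtain ⟨w, hwS, hadj, hlt⟩ := hdesc u (mem_of_mem_erase hu) hux
      refine ⟨w, mem_erase.mpr ⟨?_, hwS⟩, hadj, hlt⟩
      rintro rfl
      have := hvmax u (mem_erase.mpr ⟨hux, mem_of_mem_erase hu⟩)
      omega)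
    (fun u hu ↦ by
      have := G.degreeIn_erase_add_card_le hvS c (L u) u
      have := hle u (mem_of_mem_erase hu)
      omega)
    (by
      have := G.degreeIn_erase_add_card_le hvS c (L x) x
      omega)
  rw [← insert_erase hvS]
  exact ⟨_, hφ.update hφL hc⟩

theorem listColorable_of_degree_lt (hconn : G.Connected) (L : G.V → Finset ℤ)
    (hle : ∀ v, G.degree v ≤ #(L v)) {x : G.V} (hx : G.degree x < #(L x)) :
    G.ListColorable L := by
  obtain ⟨φ, hφ, hφL⟩ := G.exists_isColoringOn_of_degreeIn_le (G.adjGraph.dist · x) univ L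
    (mem_univ x) (fun v _ hvx ↦ by
      obtain ⟨w, hadj, hlt⟩ := (hconn.preconnected v x).exists_adj_dist_lt hvx
      exact ⟨w, mem_univ w, hadj, hlt⟩)
    (fun v _ ↦ degreeIn_univ (G := G) v ▸ hle v) (degreeIn_univ (G := G) x ▸ hx)
  exact ⟨φ, isColoringOn_univ.mp hφ, fun v ↦ hφL v (mem_univ v)⟩

theorem UncolorablePair.degree_eq_card {L : G.V → Finset ℤ} (h : G.UncolorablePair L)
    (v : G.V) : G.degree v = #(L v) :=
  (h.2.1 v).antisymm <| not_lt.mp fun hv ↦ h.2.2 (listColorable_of_degree_lt h.1 L h.2.1 hv)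

lemma Subgraph.exists_rank_of_connected (H : G.Subgraph) (hH : H.toSG.Connected) {y : G.V}
    (hy : y ∈ H.verts) :
    ∃ rank : G.V → ℕ, ∀ v ∈ H.verts, v ≠ y → ∃ w ∈ H.verts, G.Adj v w ∧ rank w < rank v := by
  refine ⟨fun v ↦ if hv : v ∈ H.verts then H.toSG.adjGraph.dist ⟨v, hv⟩ ⟨y, hy⟩ else 0,
    fun v hv hvy ↦ ?_⟩
  obtain ⟨w, hadj, hlt⟩ := (hH.preconnected ⟨v, hv⟩ ⟨y, hy⟩).exists_adj_dist_lt
    (Subtype.coe_ne_coe.mp hvy)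
  refine ⟨w.1, w.2, adj_of_toSG_adj hadj, ?_⟩
  simp only [dif_pos w.2, dif_pos hv]
  exact hlt

lemma mem_delete_topSubgraph {x v : G.V} : v ∈ (G.topSubgraph.delete x).verts ↔ v ≠ x := by
  simp [Subgraph.delete, topSubgraph]

/-- Colour `x` with `c`. If `y` kept more colours than its degree in the connected graph `G - x`,
then `G - x` could be coloured greedily towards `y`. -/
theorem UncolorablePair.card_edgesBetween_le_card_inter_forbidden {L : G.V → Finset ℤ}
    (h : G.UncolorablePair L) {x : G.V} (hx : ¬ G.IsCutVertex x) (y : G.V) {c : ℤ}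
    (hc : c ∈ L x) : #(G.edgesBetween x y) ≤ #(L y ∩ G.forbidden x c y) := by
  rcases eq_or_ne y x with rfl | hyx
  · rw [card_eq_zero.mpr (eq_empty_of_forall_notMem fun e he ↦
      ne_of_ends_eq (mem_edgesBetween.mp he) rfl)]
    exact Nat.zero_le _
  by_contra! hlt
  have hconn : (G.topSubgraph.delete x).toSG.Connected :=
    not_not.mp fun hnc ↦ hx ⟨Set.mem_univ x, ⟨y, mem_delete_topSubgraph.mpr hyx⟩, hnc⟩
  obtain ⟨rank, hrank⟩ :=
    Subgraph.exists_rank_of_connected _ hconn (mem_delete_topSubgraph.mpr hyx)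
  have hslack (v : G.V) :
      G.degreeIn (univ.erase x) v + #(L v) ≤ G.degree v + #(L v \ G.forbidden x c v) :=
    degreeIn_univ (G := G) v ▸ G.degreeIn_erase_add_card_le (mem_univ x) c (L v) v
  obtain ⟨φ, hφ, hφL⟩ := G.exists_isColoringOn_of_degreeIn_le rank (univ.erase x)
    (fun u ↦ L u \ G.forbidden x c u) (mem_erase.mpr ⟨hyx, mem_univ y⟩)
    (fun v hv hvy ↦ by
      obtain ⟨w, hw, hadj⟩ := hrank v (mem_delete_topSubgraph.mpr (ne_of_mem_erase hv)) hvy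
      exact ⟨w, mem_erase.mpr ⟨mem_delete_topSubgraph.mp hw, mem_univ w⟩, hadj⟩)
    (fun v _ ↦ by
      have := hslack v
      have := h.2.1 v
      omega)
    (by
      have hy := G.degreeIn_erase_add_card_edgesBetween_le (mem_univ x) y
      have := card_sdiff_add_card_inter (L y) (G.forbidden x c y)
      have := h.2.1 y
      rw [degreeIn_univ, edgesBetween_comm] at hy
      omega)
  obtain ⟨hcol, hmem⟩ := hφ.update hφL hc
  rw [insert_erase (mem_univ x)] at hcol hmem
  exact h.2.2 ⟨_, isColoringOn_univ.mp hcol, fun v ↦ hmem v (mem_univ v)⟩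

section Block

variable {L : G.V → Finset ℤ} (h : G.UncolorablePair L) (hblock : ∀ v, ¬ G.IsCutVertex v)
include h hblock

theorem UncolorablePair.forbidden_subset (x y : G.V) {c : ℤ} (hc : c ∈ L x) :
    G.forbidden x c y ⊆ L y := by
  have hle := (G.card_forbidden_le x c y).trans
    (h.card_edgesBetween_le_card_inter_forbidden (hblock x) y hc)
  exact inter_eq_right.mp (eq_of_subset_of_card_le inter_subset_right hle)

theorem UncolorablePair.sign_mul_mem {e : G.E} {x y : G.V} (he : G.ends e = s(x, y)) {c : ℤ}
    (hc : c ∈ L x) : G.sign e * c ∈ L y :=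
  h.forbidden_subset hblock x y hc (sign_mul_mem_forbidden he c)

theorem UncolorablePair.card_le_card_of_adj {x y : G.V} (hxy : G.Adj x y) :
    #(L x) ≤ #(L y) := by
  obtain ⟨e, he⟩ := hxy
  exact card_le_card_of_injOn (G.sign e * ·) (fun c hc ↦ h.sign_mul_mem hblock he hc)
    fun _ _ _ _ hcd ↦ mul_left_cancel₀ (sign_ne_zero e) hcd

theorem UncolorablePair.card_eq_card (v w : G.V) : #(L v) = #(L w) := by
  obtain ⟨p⟩ := h.1.preconnected v w
  induction p with
  | nil => rfl
  | cons hadj _ ih =>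
    exact (h.card_le_card_of_adj hblock hadj).antisymm
      (h.card_le_card_of_adj hblock hadj.symm) |>.trans ih

/-- Two parallel edges forbid two colours at `y`, both in `{c, -c}`. -/
theorem UncolorablePair.ne_zero_and_pair_subset {x y : G.V} (hμ : 2 ≤ #(G.edgesBetween x y))
    {c : ℤ} (hc : c ∈ L x) : c ≠ 0 ∧ {c, -c} ⊆ L y := by
  have hF : 2 ≤ #(G.forbidden x c y) :=
    hμ.trans ((h.card_edgesBetween_le_card_inter_forbidden (hblock x) y hc).trans
      (card_le_card inter_subset_right))
  have hpair : G.forbidden x c y = {c, -c} :=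
    eq_of_subset_of_card_le (G.forbidden_subset_pair x c y) (card_le_two.trans hF)
  refine ⟨fun hc0 ↦ ?_, hpair ▸ h.forbidden_subset hblock x y hc⟩
  rw [hpair, hc0] at hF
  simp at hF

end Block

end SignedGraph

open SignedGraph in
/-- An uncolorable pair whose graph is a block with a multiple
edge is `r`-regular for an even `r ≥ 2`. -/
theorem uncolorablePair_block_multiEdge_even_regular (G : SignedGraph)
    (L : G.V → Finset ℤ) (h : G.UncolorablePair L)
    (hblock : ∀ v : G.V, ¬ G.IsCutVertex v)
    (hmul : ∃ e f : G.E, e ≠ f ∧ G.ends e = G.ends f) :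
    ∃ r : ℕ, Even r ∧ 2 ≤ r ∧ ∀ v : G.V, G.degree v = r := by
  obtain ⟨e, f, hef, hends⟩ := hmul
  obtain ⟨⟨x, w⟩, hxw⟩ := Quot.exists_rep (G.ends e)
  have hμ : 2 ≤ #(G.edgesBetween x w) := by
    rw [← card_pair hef]
    refine card_le_card fun g hg ↦ mem_edgesBetween.mpr ?_
    rcases mem_insert.mp hg with rfl | hg
    · exact hxw.symm
    · exact mem_singleton.mp hg ▸ hends ▸ hxw.symm
  have hμ' : 2 ≤ #(G.edgesBetween w x) := edgesBetween_comm x w ▸ hμ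
  refine ⟨#(L x), Int.even_card_of_neg_mem ?_ ?_, ?_, fun v ↦ ?_⟩
  · exact fun h0 ↦ (h.ne_zero_and_pair_subset hblock hμ h0).1 rfl
  · intro c hc
    have hw : -c ∈ L w := (h.ne_zero_and_pair_subset hblock hμ hc).2 (by simp)
    exact (h.ne_zero_and_pair_subset hblock hμ' hw).2 (by simp)
  · exact h.degree_eq_card x ▸ hμ.trans (card_edgesBetween_le_degree x w)
  · exact (h.degree_eq_card v).trans (h.card_eq_card hblock v x)
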